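/- Let W = [[W₁₁, W₁₂],[W₂₁, W₂₂]] be a bounded operator on H ⊕ H satisfying W* J W ≤ J where J = [[0, −I],[−I, 0]]. Let A be positive real with W₂₁A + W₂₂ invertible, and set T_W[A] = (W₁₁A + W₁₂)(W₂₁A + W₂₂)^{-1}. Then Re(T_W[A]) ≥ (W₂₁A + W₂₂)^{-*} Re(A) (W₂₁A + W₂₂)^{-1}; in particular T_W[A] is positive real. -/

import Mathlib

open ContinuousLinearMap

variable {H : Type*} [NormedAddCommGroup H] [InnerProductSpace ℂ H] [CompleteSpace H]

/-- The real part `(T + T*)/2` of a bounded operator. -/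
noncomputable def opRe (T : H →L[ℂ] H) : H →L[ℂ] H :=
  (2 : ℂ)⁻¹ • (T + ContinuousLinearMap.adjoint T)

/-- The positive square root of the real part of an operator. -/
noncomputable def sqrtRe (T : H →L[ℂ] H) : H →L[ℂ] H := CFC.sqrt (opRe T)

/-!
Write `D = W₂₁A + W₂₂`. For `u ∈ H` put `v = D⁻¹u`; then `W [Av; v] = [T_W[A] u; u]`, so the
contraction hypothesis `Re ⟪x, y⟫ ≤ Re ⟪W₁₁x + W₁₂y, W₂₁x + W₂₂y⟫` at `(x, y) = (Av, v)` reads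
`Re ⟪A D⁻¹u, D⁻¹u⟫ ≤ Re ⟪T_W[A] u, u⟫`. Since `Re ⟪S u, u⟫ = ⟪Re(S) u, u⟫`, this is the operator
inequality `D⁻* Re(A) D⁻¹ ≤ Re(T_W[A])`, and the left side is positive because `Re(A)` is.
-/

lemma opRe_isSelfAdjoint (T : H →L[ℂ] H) : IsSelfAdjoint (opRe T) := by
  rw [IsSelfAdjoint, opRe, star_smul, star_add]
  simp only [star_eq_adjoint, adjoint_adjoint]
  rw [add_comm]
  congr 1
  simp

lemma re_inner_opRe_apply (T : H →L[ℂ] H) (u : H) :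
    (inner ℂ (opRe T u) u : ℂ).re = (inner ℂ (T u) u : ℂ).re := by
  simp only [opRe, smul_apply, add_apply, inner_smul_left, inner_add_left,
    adjoint_inner_left]
  rw [← inner_conj_symm u (T u), Complex.add_conj]
  simp

lemma isPositive_opRe_iff (T : H →L[ℂ] H) :
    (opRe T).IsPositive ↔ ∀ u, 0 ≤ (inner ℂ (T u) u : ℂ).re := by
  simp only [isPositive_def', reApplyInnerSelf, RCLike.re_to_complex, re_inner_opRe_apply,
    opRe_isSelfAdjoint, true_and]

lemma opRe_sub (T S : H →L[ℂ] H) : opRe (T - S) = opRe T - opRe S := by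
  simp only [opRe, map_sub, ← smul_sub]
  abel_nf

lemma opRe_adjoint_conj (A C : H →L[ℂ] H) :
    opRe (adjoint C ∘L A ∘L C) = adjoint C ∘L opRe A ∘L C := by
  simp only [opRe, adjoint_comp, adjoint_adjoint, comp_smul, smul_comp, comp_add, add_comp,
    comp_assoc]

lemma re_inner_apply_le_of_contractive {𝕜 E : Type*} [RCLike 𝕜] [NormedAddCommGroup E]
    [InnerProductSpace 𝕜 E] {W11 W12 W21 W22 : E →L[𝕜] E}
    (hJ : ∀ x y : E, RCLike.re (inner 𝕜 x y) ≤
      RCLike.re (inner 𝕜 (W11 x + W12 y) (W21 x + W22 y)))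
    {A D : E →L[𝕜] E} (hD : (W21 ∘L A + W22) ∘L D = 1) (u : E) :
    RCLike.re (inner 𝕜 (A (D u)) (D u)) ≤ RCLike.re (inner 𝕜 (((W11 ∘L A + W12) ∘L D) u) u) := by
  have hu : W21 (A (D u)) + W22 (D u) = u := by simpa using congr($hD u)
  simpa [hu] using hJ (A (D u)) (D u)

theorem stmt15_general (W11 W12 W21 W22 : H →L[ℂ] H)
    (hJ : ∀ x y : H, (inner ℂ x y : ℂ).re ≤
      (inner ℂ (W11 x + W12 y) (W21 x + W22 y) : ℂ).re)
    (A : H →L[ℂ] H) (hA : (opRe A).IsPositive)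
    (Dinv : H →L[ℂ] H)
    (hD1 : (W21 ∘L A + W22) ∘L Dinv = 1) :
    (opRe ((W11 ∘L A + W12) ∘L Dinv) -
        ContinuousLinearMap.adjoint Dinv ∘L opRe A ∘L Dinv).IsPositive ∧
    (opRe ((W11 ∘L A + W12) ∘L Dinv)).IsPositive := by
  have hgap : (opRe ((W11 ∘L A + W12) ∘L Dinv) -
      adjoint Dinv ∘L opRe A ∘L Dinv).IsPositive := by
    rw [← opRe_adjoint_conj, ← opRe_sub, isPositive_opRe_iff]
    intro u
    simpa [inner_sub_left, inner_add_left, adjoint_inner_left] using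
      re_inner_apply_le_of_contractive hJ hD1 u
  exact ⟨hgap, by simpa using hgap.add (hA.adjoint_conj Dinv)⟩

theorem stmt15 (W11 W12 W21 W22 : H →L[ℂ] H)
    (hJ : ∀ x y : H, (inner ℂ x y : ℂ).re ≤
      (inner ℂ (W11 x + W12 y) (W21 x + W22 y) : ℂ).re)
    (A : H →L[ℂ] H) (hA : (opRe A).IsPositive)
    (Dinv : H →L[ℂ] H)
    (hD1 : (W21 ∘L A + W22) ∘L Dinv = 1) (hD2 : Dinv ∘L (W21 ∘L A + W22) = 1) :
    (opRe ((W11 ∘L A + W12) ∘L Dinv) -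
        ContinuousLinearMap.adjoint Dinv ∘L opRe A ∘L Dinv).IsPositive ∧
    (opRe ((W11 ∘L A + W12) ∘L Dinv)).IsPositive :=
  stmt15_general W11 W12 W21 W22 hJ A hA Dinv hD1
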